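/- Let M be a binary matroid with ground set S, let X = {x_1, ..., x_m} be a nonempty independent set in M, and let M^X be the Γ-extension of M with Γ = {γ_1, ..., γ_m}. Let J ⊆ Γ be a nonempty set of even cardinality, let X_J = {x_i ∈ X : γ_i ∈ J}, and let D be a circuit of M with X_J ⊆ D. Then J ∪ (D − X_J) is a circuit of M^X. -/

import Mathlib

open Set
open scoped Classical

/-- A circuit of a matroid: a minimal dependent set. -/
def MatroidCircuit {α : Type*} (M : Matroid α) (C : Set α) : Prop :=
  M.Dep C ∧ ∀ D ⊂ C, ¬ M.Dep D

/-- A cocircuit of a matroid: a circuit of the dual matroid. -/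
def MatroidCocircuit {α : Type*} (M : Matroid α) (C : Set α) : Prop :=
  MatroidCircuit M✶ C

/-- The rank of a set in a matroid, as an extended natural number: the supremum of the
cardinalities of independent subsets of the set. -/
noncomputable def matroidERk {α : Type*} (M : Matroid α) (A : Set α) : ℕ∞ :=
  ⨆ I : {I : Set α // M.Indep I ∧ I ⊆ A}, (I : Set α).encard

/-- The rank of a matroid. -/
noncomputable def matroidERank {α : Type*} (M : Matroid α) : ℕ∞ :=
  matroidERk M M.E

/-- Deletion of a set from a matroid: the restriction to the complement. -/
def matroidDelete {α : Type*} (M : Matroid α) (Y : Set α) : Matroid α :=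
  M.restrict (M.E \ Y)

/-- A `k`-separation of a matroid `M`: a partition of the ground set into disjoint sets `A`, `B`
with `min (|A|, |B|) ≥ k` and `r(A) + r(B) - r(M) ≤ k - 1`. -/
def KSeparation {α : Type*} (M : Matroid α) (k : ℕ) (A B : Set α) : Prop :=
  Disjoint A B ∧ A ∪ B = M.E ∧ (k : ℕ∞) ≤ A.encard ∧ (k : ℕ∞) ≤ B.encard ∧
    matroidERk M A + matroidERk M B ≤ matroidERank M + ((k : ℕ∞) - 1)

/-- For `k ≥ 2`, a matroid is `k`-connected if it has no `(k-1)`-separation. -/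
def KConnected {α : Type*} (M : Matroid α) (k : ℕ) : Prop :=
  ∀ A B : Set α, ¬ KSeparation M (k - 1) A B

/-- The relation `e ~ f` iff `e = f` or some circuit contains both `e` and `f`. -/
def ConnRel {α : Type*} (M : Matroid α) (e f : α) : Prop :=
  e = f ∨ ∃ C, MatroidCircuit M C ∧ e ∈ C ∧ f ∈ C

/-- A component of a matroid: an equivalence class of the relation `ConnRel` on the
ground set. -/
def MatroidComponent {α : Type*} (M : Matroid α) (D : Set α) : Prop :=
  ∃ e ∈ M.E, D = {f ∈ M.E | ConnRel M e f}

/-- A matroid is connected if it has exactly one component. -/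
def MatroidConnected {α : Type*} (M : Matroid α) : Prop :=
  ∃! D : Set α, MatroidComponent M D

/-- `M` is the vector matroid over GF(2) of the matrix with column set `S` whose column at
`e ∈ S` is `A e`: a set is independent iff it is a subset of `S` whose columns are linearly
independent over GF(2). -/
def IsBinaryRep {α ρ : Type*} (M : Matroid α) (S : Set α) (A : α → ρ → ZMod 2) : Prop :=
  M.E = S ∧ ∀ I : Set α, M.Indep I ↔ I ⊆ S ∧ LinearIndependent (ZMod 2) (fun e : I => A e.1)

/-- The columns of the matrix `A^X` of the Γ-extension: for each index `i`, the new column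
labelled `g i` agrees with the column of `x i` in the old rows and has entry `1` in the new
row (indexed by `none`), while every old column keeps its entries in the old rows and has
entry `0` in the new row. -/
noncomputable def gammaCols {α ρ ι : Type*} (A : α → ρ → ZMod 2) (x g : ι → α) :
    α → Option ρ → ZMod 2 := fun e o =>
  if h : ∃ i, g i = e then o.elim 1 (fun r => A (x h.choose) r)
  else o.elim 0 (fun r => A e r)

/-!
Over GF(2) a set of columns is dependent exactly when some nonempty finite subset of it sums to
zero, so the circuits of a binary matroid are the minimal nonempty zero-sum sets of columns.
A subset `g '' T' ∪ Y` of `g '' T ∪ (D \ x '' T)` sums to zero in `A^X` exactly when `|T'|` is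
even and `x '' T' ∪ Y` sums to zero in `A`. The latter is a nonempty subset of the circuit `D`,
hence all of `D`, which forces `T' = T` and `Y = D \ x '' T`; for `T' = T` and
`Y = D \ x '' T` the evenness of `|T|` makes the sum vanish.
-/

open Function

theorem not_linearIndepOn_zmod_two_iff {ι V : Type*} [AddCommGroup V] [Module (ZMod 2) V]
    {v : ι → V} {s : Set ι} :
    ¬ LinearIndepOn (ZMod 2) v s ↔ ∃ t : Finset ι, ↑t ⊆ s ∧ t.Nonempty ∧ ∑ i ∈ t, v i = 0 := by
  rw [linearIndepOn_iff']
  push Not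
  constructor
  · rintro ⟨t, c, hts, hc, i, hit, hci⟩
    have hc1 : ∀ j ∈ t.filter (c · ≠ 0), c j = 1 :=
      fun j hj => Fin.eq_one_of_ne_zero (c j) (Finset.mem_filter.1 hj).2
    refine ⟨t.filter (c · ≠ 0), (Finset.coe_subset.2 (Finset.filter_subset _ _)).trans hts,
      ⟨i, Finset.mem_filter.2 ⟨hit, hci⟩⟩, ?_⟩
    rw [← hc, ← Finset.sum_filter_of_ne fun j _ h => left_ne_zero_of_smul h]
    exact Finset.sum_congr rfl fun j hj => by rw [hc1 j hj, one_smul]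
  · rintro ⟨t, hts, ⟨i, hit⟩, ht⟩
    exact ⟨t, fun _ => 1, hts, by simpa using ht, i, hit, one_ne_zero⟩

namespace IsBinaryRep

variable {α ρ : Type*} {M : Matroid α} {S : Set α} {A : α → ρ → ZMod 2}

theorem dep_iff (hM : IsBinaryRep M S A) {C : Set α} :
    M.Dep C ↔ C ⊆ S ∧ ∃ Z : Finset α, ↑Z ⊆ C ∧ Z.Nonempty ∧ ∑ e ∈ Z, A e = 0 := by
  rw [Matroid.dep_iff, hM.2, hM.1, ← not_linearIndepOn_zmod_two_iff]
  exact ⟨fun ⟨h, hC⟩ => ⟨hC, fun hli => h ⟨hC, hli⟩⟩, fun ⟨hC, h⟩ => ⟨fun hi => h hi.2, hC⟩⟩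

theorem coe_eq_of_matroidCircuit (hM : IsBinaryRep M S A) {D : Set α} (hD : MatroidCircuit M D)
    {Z : Finset α} (hZD : ↑Z ⊆ D) (hZ : Z.Nonempty) (hZ0 : ∑ e ∈ Z, A e = 0) : ↑Z = D := by
  by_contra hne
  exact hD.2 _ (hZD.ssubset_of_ne hne)
    (hM.dep_iff.2 ⟨hZD.trans (hM.dep_iff.1 hD.1).1, Z, subset_rfl, hZ, hZ0⟩)

theorem exists_finset_eq_of_matroidCircuit (hM : IsBinaryRep M S A) {D : Set α}
    (hD : MatroidCircuit M D) : ∃ Z : Finset α, ↑Z = D := by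
  obtain ⟨-, Z, hZD, hZ, hZ0⟩ := hM.dep_iff.1 hD.1
  exact ⟨Z, hM.coe_eq_of_matroidCircuit hD hZD hZ hZ0⟩

theorem matroidCircuit_coe_iff (hM : IsBinaryRep M S A) {Z : Finset α} :
    MatroidCircuit M ↑Z ↔
      ↑Z ⊆ S ∧ Minimal (fun W : Finset α => W.Nonempty ∧ ∑ e ∈ W, A e = 0) Z := by
  constructor
  · intro hZ
    obtain ⟨hZS, W, hWZ, hW, hW0⟩ := hM.dep_iff.1 hZ.1
    have hmin : ∀ V : Finset α, V.Nonempty ∧ ∑ e ∈ V, A e = 0 → V ⊆ Z → V = Z :=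
      fun V hV hVZ => Finset.coe_injective (hM.coe_eq_of_matroidCircuit hZ hVZ hV.1 hV.2)
    obtain rfl := hmin W ⟨hW, hW0⟩ (Finset.coe_subset.1 hWZ)
    exact ⟨hZS, ⟨hW, hW0⟩, fun V hV hVW => (hmin V hV hVW).ge⟩
  · rintro ⟨hZS, hZ⟩
    refine ⟨hM.dep_iff.2 ⟨hZS, Z, subset_rfl, hZ.prop⟩, fun C hCZ hC => ?_⟩
    obtain ⟨-, W, hWC, hW⟩ := hM.dep_iff.1 hC
    have hWZ : W ⊆ Z := Finset.coe_subset.1 (hWC.trans hCZ.subset)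
    exact hCZ.not_subset (hZ.eq_of_ge hW hWZ ▸ hWC)

end IsBinaryRep

theorem Finset.exists_eq_image_union_of_subset {ι α : Type*} [DecidableEq α] {f : ι → α}
    {T : Finset ι} {Y Z : Finset α} (h : Z ⊆ T.image f ∪ Y) :
    ∃ T' ⊆ T, ∃ Y' ⊆ Y, Z = T'.image f ∪ Y' := by
  refine ⟨T.filter (f · ∈ Z), Finset.filter_subset _ _, Z ∩ Y, Finset.inter_subset_right, ?_⟩
  ext e
  constructor
  · intro he
    rcases Finset.mem_union.1 (h he) with hT | hY
    · obtain ⟨i, hi, rfl⟩ := Finset.mem_image.1 hT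
      exact Finset.mem_union_left _ (Finset.mem_image_of_mem f (Finset.mem_filter.2 ⟨hi, he⟩))
    · exact Finset.mem_union_right _ (Finset.mem_inter.2 ⟨he, hY⟩)
  · intro he
    rcases Finset.mem_union.1 he with he | he
    · obtain ⟨i, hi, rfl⟩ := Finset.mem_image.1 he
      exact (Finset.mem_filter.1 hi).2
    · exact (Finset.mem_inter.1 he).1

section GammaExtension

variable {α ρ ι : Type*} {A : α → ρ → ZMod 2} {x g : ι → α}

theorem gammaCols_apply_self (hg : Injective g) (i : ι) :
    gammaCols A x g (g i) = fun o => o.elim 1 (A (x i)) := by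
  have h : ∃ j, g j = g i := ⟨i, rfl⟩
  funext o
  simp only [gammaCols, dif_pos h, hg h.choose_spec]

theorem gammaCols_of_notMem_range {e : α} (he : e ∉ Set.range g) :
    gammaCols A x g e = fun o => o.elim 0 (A e) := by
  funext o
  exact dif_neg he

theorem sum_gammaCols_eq_zero_iff (hg : Injective g) (T : Finset ι) {Y : Finset α}
    (hY : Disjoint (Y : Set α) (Set.range g)) :
    ∑ e ∈ T.image g ∪ Y, gammaCols A x g e = 0 ↔
      Even T.card ∧ ∑ i ∈ T, A (x i) + ∑ e ∈ Y, A e = 0 := by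
  have hTY : Disjoint (T.image g) Y := by
    rw [← Finset.disjoint_coe, Finset.coe_image]
    exact hY.symm.mono_left (Set.image_subset_range _ _)
  rw [Finset.sum_union hTY, Finset.sum_image hg.injOn]
  simp only [gammaCols_apply_self hg,
    Finset.sum_congr rfl fun e he => gammaCols_of_notMem_range (x := x) (hY.notMem_of_mem_left he)]
  rw [funext_iff, Option.forall]
  simp [Finset.sum_apply, ZMod.natCast_eq_zero_iff_even, funext_iff]

theorem minimal_sum_gammaCols_image_union (hx : Injective x) (hg : Injective g)
    {T : Finset ι} (hT : T.Nonempty) (hTeven : Even T.card) {D : Finset α}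
    (hD : Minimal (fun W : Finset α => W.Nonempty ∧ ∑ e ∈ W, A e = 0) D)
    (hxT : T.image x ⊆ D) (hDg : Disjoint (D : Set α) (Set.range g)) :
    Minimal (fun W : Finset α => W.Nonempty ∧ ∑ e ∈ W, gammaCols A x g e = 0)
      (T.image g ∪ (D \ T.image x)) := by
  have hY : Disjoint (↑(D \ T.image x) : Set α) (Set.range g) :=
    hDg.mono_left (Finset.coe_subset.2 Finset.sdiff_subset)
  refine ⟨⟨(hT.image g).mono Finset.subset_union_left,
    (sum_gammaCols_eq_zero_iff hg T hY).2 ⟨hTeven, ?_⟩⟩, ?_⟩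
  · rw [← Finset.sum_image hx.injOn, add_comm, Finset.sum_sdiff hxT]
    exact hD.prop.2
  rintro Z ⟨hZ, hZ0⟩ hZC
  obtain ⟨T', hT', Y, hYD, rfl⟩ := Finset.exists_eq_image_union_of_subset hZC
  have hYx : Disjoint (T'.image x) Y :=
    Finset.disjoint_of_subset_right hYD
      (Finset.disjoint_sdiff.mono_left (Finset.image_subset_image hT'))
  obtain ⟨-, hsum⟩ := (sum_gammaCols_eq_zero_iff hg T'
    (hY.mono_left (Finset.coe_subset.2 hYD))).1 hZ0
  have hW : T'.image x ∪ Y = D := by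
    refine hD.eq_of_le ⟨?_, ?_⟩ (Finset.union_subset
      ((Finset.image_subset_image hT').trans hxT) (hYD.trans Finset.sdiff_subset))
    · simpa only [Finset.union_nonempty, Finset.image_nonempty] using hZ
    · rwa [Finset.sum_union hYx, Finset.sum_image hx.injOn]
  refine Finset.union_subset_union (Finset.image_subset_image fun i hi => ?_) fun e he => ?_
  · have hxi : x i ∈ T'.image x ∪ Y := hW ▸ hxT (Finset.mem_image_of_mem x hi)
    rcases Finset.mem_union.1 hxi with h | h
    · exact hx.mem_finset_image.1 h
    · exact absurd (Finset.mem_image_of_mem x hi) (Finset.mem_sdiff.1 (hYD h)).2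
  · obtain ⟨heD, hex⟩ := Finset.mem_sdiff.1 he
    rcases Finset.mem_union.1 (hW ▸ heD : e ∈ T'.image x ∪ Y) with h | h
    · exact absurd (Finset.image_subset_image hT' h) hex
    · exact h

end GammaExtension

theorem stmt_10_general {α ρ ι : Type*}
    (M MX : Matroid α) (S : Set α) (A : α → ρ → ZMod 2) (x g : ι → α)
    (hxinj : Function.Injective x) (hginj : Function.Injective g)
    (hdisj : Disjoint S (Set.range g))
    (hM : IsBinaryRep M S A)
    (hMX : IsBinaryRep MX (S ∪ Set.range g) (gammaCols A x g))
    (T : Finset ι) (hT : T.Nonempty) (hTeven : Even T.card)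
    (D : Set α) (hD : MatroidCircuit M D) (hXJ : x '' (T : Set ι) ⊆ D) :
    MatroidCircuit MX (g '' (T : Set ι) ∪ (D \ x '' (T : Set ι))) := by
  obtain ⟨D, rfl⟩ := hM.exists_finset_eq_of_matroidCircuit hD
  obtain ⟨hDS, hDmin⟩ := hM.matroidCircuit_coe_iff.1 hD
  have hxT : T.image x ⊆ D := by rwa [← Finset.coe_subset, Finset.coe_image]
  have hC : g '' (T : Set ι) ∪ (↑D \ x '' (T : Set ι)) = ↑(T.image g ∪ (D \ T.image x)) := by
    push_cast; rfl
  rw [hC, hMX.matroidCircuit_coe_iff]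
  refine ⟨?_, minimal_sum_gammaCols_image_union hxinj hginj hT hTeven hDmin hxT
    (hdisj.mono_left hDS)⟩
  rw [Finset.coe_union, Finset.coe_image, Finset.coe_sdiff]
  exact Set.union_subset (Set.subset_union_of_subset_right (Set.image_subset_range _ _) _)
    (Set.subset_union_of_subset_left (Set.sdiff_subset.trans hDS) _)

/-- Lemma 2.2(iii): If `J = g '' T ⊆ Γ` is nonempty of even cardinality, `X_J = x '' T`, and
`D` is a circuit of `M` containing `X_J`, then `J ∪ (D - X_J)` is a circuit of `M^X`. -/
theorem stmt_10 {α ρ ι : Type*} [Fintype ι] [Nonempty ι]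
    (M MX : Matroid α) (S : Set α) (A : α → ρ → ZMod 2) (x g : ι → α)
    (hxinj : Function.Injective x) (hginj : Function.Injective g)
    (hxS : Set.range x ⊆ S) (hdisj : Disjoint S (Set.range g))
    (hXindep : M.Indep (Set.range x))
    (hM : IsBinaryRep M S A)
    (hMX : IsBinaryRep MX (S ∪ Set.range g) (gammaCols A x g))
    (T : Finset ι) (hT : T.Nonempty) (hTeven : Even T.card)
    (D : Set α) (hD : MatroidCircuit M D) (hXJ : x '' (T : Set ι) ⊆ D) :
    MatroidCircuit MX (g '' (T : Set ι) ∪ (D \ x '' (T : Set ι))) :=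
  stmt_10_general M MX S A x g hxinj hginj hdisj hM hMX T hT hTeven D hD hXJ
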